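/- arXiv:2010.08842 — 3 statements merged into one kernel-verified Lean document; each statement's English description precedes it below -/
import Mathlib

section
/- Let d = 2 and let ‖·‖₁ denote the Manhattan (ℓ¹) norm on ℝ². For any unimodular lattice L in ℝ², any α ∈ ℝ², and any integer N ≥ 1, the number g_N^{ℓ¹}(α,L) of distinct values taken by the nearest-neighbor distances δ^{ℓ¹}_{n,N}, 1 ≤ n ≤ N, with respect to the Manhattan metric, satisfies g_N^{ℓ¹}(α,L) ≤ 5. -/
open Matrix Set

/-- The point of the lattice `ℤ^d M₀` corresponding to the integer row vector `w`. -/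
noncomputable def latticeVec {d : ℕ} (M₀ : Matrix (Fin d) (Fin d) ℝ) (w : Fin d → ℤ) :
    Fin d → ℝ :=
  (fun i => (w i : ℝ)) ᵥ* M₀

/-- `δ*_{n,N}`: the smallest positive distance, in the maximum metric (the sup norm on
`Fin d → ℝ`), from `n α` to a point `m α + ℓ` with `1 ≤ m ≤ N` and `ℓ ∈ ℤ^d M₀`. -/
noncomputable def deltaStar {d : ℕ} (M₀ : Matrix (Fin d) (Fin d) ℝ) (α : Fin d → ℝ)
    (N n : ℕ) : ℝ :=
  sInf { r : ℝ | ∃ (m : ℕ) (w : Fin d → ℤ), 1 ≤ m ∧ m ≤ N ∧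
    r = ‖(n : ℝ) • α - (m : ℝ) • α - latticeVec M₀ w‖ ∧ 0 < r }

/-- `g_N^*(α, ℤ^d M₀)`: the number of distinct values among `δ*_{1,N}, …, δ*_{N,N}`. -/
noncomputable def gStar {d : ℕ} (M₀ : Matrix (Fin d) (Fin d) ℝ) (α : Fin d → ℝ) (N : ℕ) : ℕ :=
  { x : ℝ | ∃ n : ℕ, 1 ≤ n ∧ n ≤ N ∧ x = deltaStar M₀ α N n }.ncard

/-- `δ^{ℓ¹}_{n,N}`: the smallest positive distance, in the Manhattan (ℓ¹) metric, from
`n α` to a point `m α + ℓ` with `1 ≤ m ≤ N` and `ℓ ∈ ℤ^d M₀`. -/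
noncomputable def deltaOne {d : ℕ} (M₀ : Matrix (Fin d) (Fin d) ℝ) (α : Fin d → ℝ)
    (N n : ℕ) : ℝ :=
  sInf { r : ℝ | ∃ (m : ℕ) (w : Fin d → ℤ), 1 ≤ m ∧ m ≤ N ∧
    r = ∑ i, |((n : ℝ) • α - (m : ℝ) • α - latticeVec M₀ w) i| ∧ 0 < r }

/-- `g_N^{ℓ¹}(α, ℤ^d M₀)`: the number of distinct values among
`δ^{ℓ¹}_{1,N}, …, δ^{ℓ¹}_{N,N}`. -/
noncomputable def gOne {d : ℕ} (M₀ : Matrix (Fin d) (Fin d) ℝ) (α : Fin d → ℝ) (N : ℕ) : ℕ :=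
  { x : ℝ | ∃ n : ℕ, 1 ≤ n ∧ n ≤ N ∧ x = deltaOne M₀ α N n }.ncard

/-!
The nearest-neighbour distance of `nα` is `F J = min_{0 ≤ j ≤ J} d j` with
`J = max (n - 1) (N - n)`, where `d j` is the least positive ℓ¹ distance from `jα` to the
lattice; as `n` varies, `J` stays in `[N / 2, N - 1]`. Apart from `F (N / 2)`, every value of
`F` there is `d t` for a record `t ∈ (N / 2, N - 1]`, i.e. `d t < d s` for all `s < t`. For
records `s < t` we have `t - s < s`, so the difference of vectors realising `d s` and `d t` is a
nonzero vector of `(t - s)α + L`, of length at least `d (t - s) > d s = max (d s) (d t)`. In the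
ℓ¹ plane two vectors in the same quadrant of the coordinates `(x + y, x - y)` are at distance at
most the larger of their norms, so there are at most four records.
-/

open Bornology Metric Function

section Lattice

variable {d : ℕ}

def l1Norm (v : Fin d → ℝ) : ℝ := ∑ i, |v i|

lemma l1Norm_nonneg (v : Fin d → ℝ) : 0 ≤ l1Norm v :=
  Finset.sum_nonneg fun _ _ => abs_nonneg _

lemma l1Norm_pos_iff {v : Fin d → ℝ} : 0 < l1Norm v ↔ v ≠ 0 := by
  rw [(l1Norm_nonneg v).lt_iff_ne', ne_eq, l1Norm,
    Finset.sum_eq_zero_iff_of_nonneg fun _ _ => abs_nonneg _, not_iff_not]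
  simp [funext_iff]

lemma l1Norm_neg (v : Fin d → ℝ) : l1Norm (-v) = l1Norm v := by
  simp [l1Norm]

lemma l1Norm_sub_comm (v v' : Fin d → ℝ) : l1Norm (v - v') = l1Norm (v' - v) := by
  rw [← l1Norm_neg, neg_sub]

lemma norm_le_l1Norm (v : Fin d → ℝ) : ‖v‖ ≤ l1Norm v :=
  (pi_norm_le_iff_of_nonneg (l1Norm_nonneg v)).2 fun i =>
    Finset.single_le_sum (f := fun i => |v i|) (fun _ _ => abs_nonneg _) (Finset.mem_univ i)

variable (M₀ : Matrix (Fin d) (Fin d) ℝ)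

def latticeVecHom : (Fin d → ℤ) →+ (Fin d → ℝ) :=
  (vecMulLinear M₀).toAddMonoidHom.comp ((Int.castAddHom ℝ).compLeft (Fin d))

lemma latticeVec_neg (w : Fin d → ℤ) : latticeVec M₀ (-w) = -latticeVec M₀ w :=
  map_neg (latticeVecHom M₀) w

lemma latticeVec_sub (w w' : Fin d → ℤ) :
    latticeVec M₀ (w - w') = latticeVec M₀ w - latticeVec M₀ w' :=
  map_sub (latticeVecHom M₀) w w'

lemma latticeVec_injective (hM : IsUnit M₀.det) : Injective (latticeVec M₀) :=
  (vecMul_injective_iff_isUnit.2 ((isUnit_iff_isUnit_det M₀).2 hM)).comp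
    fun _ _ h => funext fun i => Int.cast_injective (congrFun h i)

lemma finite_setOf_intCast_mem {t : Set (Fin d → ℝ)} (ht : IsBounded t) :
    {w : Fin d → ℤ | (fun i => (w i : ℝ)) ∈ t}.Finite := by
  obtain ⟨R, hR⟩ := ht.subset_closedBall 0
  refine (Set.finite_Icc (fun _ => -⌈R⌉) fun _ => ⌈R⌉).subset fun w hw => ?_
  rw [Set.mem_Icc, Pi.le_def, Pi.le_def, ← forall_and]
  intro i
  have hwi : |(w i : ℝ)| ≤ R :=
    (norm_le_pi_norm (fun i => (w i : ℝ)) i).trans (mem_closedBall_zero_iff.1 (hR hw))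
  exact abs_le.1 (by exact_mod_cast hwi.trans (Int.le_ceil R))

lemma finite_preimage_latticeVec (hM : IsUnit M₀.det) {s : Set (Fin d → ℝ)} (hs : IsBounded s) :
    (latticeVec M₀ ⁻¹' s).Finite := by
  have hbdd : IsBounded ((· ᵥ* M₀⁻¹) '' s) :=
    (vecMulLinear M₀⁻¹).toContinuousLinearMap.lipschitz.isBounded_image hs
  refine (finite_setOf_intCast_mem hbdd).subset fun w hw => ⟨latticeVec M₀ w, hw, ?_⟩
  simp only [latticeVec, vecMul_vecMul, mul_nonsing_inv _ hM, vecMul_one]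

lemma finite_setOf_l1Norm_sub_latticeVec_le (hM : IsUnit M₀.det) (x : Fin d → ℝ) (r : ℝ) :
    {w | l1Norm (x - latticeVec M₀ w) ≤ r}.Finite :=
  (finite_preimage_latticeVec M₀ hM isBounded_closedBall).subset fun w hw => by
    rw [Set.mem_preimage, mem_closedBall, dist_eq_norm, ← norm_neg, neg_sub]
    exact (norm_le_l1Norm _).trans hw

def posLatticeDists (x : Fin d → ℝ) : Set ℝ :=
  {r | ∃ w, r = l1Norm (x - latticeVec M₀ w) ∧ 0 < r}

lemma posLatticeDists_nonempty [NeZero d] (hM : IsUnit M₀.det) (x : Fin d → ℝ) :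
    (posLatticeDists M₀ x).Nonempty := by
  suffices ∃ w, x - latticeVec M₀ w ≠ 0 from
    let ⟨w, hw⟩ := this; ⟨_, w, rfl, l1Norm_pos_iff.2 hw⟩
  by_contra! h
  have h01 := (h 0).trans (h (Pi.single 0 1)).symm
  rw [sub_right_inj] at h01
  exact Pi.single_ne_zero_iff.2 one_ne_zero (latticeVec_injective M₀ hM h01).symm

lemma exists_isLeast_posLatticeDists [NeZero d] (hM : IsUnit M₀.det) (x : Fin d → ℝ) :
    ∃ r, IsLeast (posLatticeDists M₀ x) r := by
  obtain ⟨r₀, hr₀⟩ := posLatticeDists_nonempty M₀ hM x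
  have hfin : (posLatticeDists M₀ x ∩ Set.Iic r₀).Finite :=
    ((finite_setOf_l1Norm_sub_latticeVec_le M₀ hM x r₀).image
      fun w => l1Norm (x - latticeVec M₀ w)).subset
      fun r ⟨⟨w, hw, _⟩, hr⟩ => ⟨w, show _ ≤ r₀ from hw ▸ hr, hw.symm⟩
  obtain ⟨r, ⟨hr, -⟩, hmin⟩ := hfin.isCompact.exists_isLeast ⟨r₀, hr₀, Set.mem_Iic.2 le_rfl⟩
  refine ⟨r, hr, fun r' hr' => ?_⟩
  rcases le_total r' r₀ with h | h
  · exact hmin ⟨hr', h⟩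
  · exact (hmin ⟨hr₀, Set.mem_Iic.2 le_rfl⟩).trans h

end Lattice

section PrefixMin

variable {β : Type*} [LinearOrder β] (f : ℕ → β)

def prefixMin (J : ℕ) : β := (Finset.Iic J).inf' Finset.nonempty_Iic f

def IsRecord (t : ℕ) : Prop := ∀ s < t, f t < f s

variable {f}

lemma prefixMin_le {j J : ℕ} (h : j ≤ J) : prefixMin f J ≤ f j :=
  Finset.inf'_le f (Finset.mem_Iic.2 h)

lemma prefixMin_antitone : Antitone (prefixMin f) := fun _ _ h =>
  Finset.inf'_mono f (Finset.Iic_subset_Iic.2 h) Finset.nonempty_Iic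

lemma exists_isRecord_prefixMin_eq (J : ℕ) : ∃ t ≤ J, IsRecord f t ∧ prefixMin f J = f t := by
  have hex : ∃ t, t ≤ J ∧ f t = prefixMin f J := by
    obtain ⟨t, ht, heq⟩ := Finset.exists_mem_eq_inf' (Finset.nonempty_Iic (a := J)) f
    exact ⟨t, Finset.mem_Iic.1 ht, heq.symm⟩
  classical
  refine ⟨Nat.find hex, (Nat.find_spec hex).1, fun s hs => ?_, (Nat.find_spec hex).2.symm⟩
  have hsJ : s ≤ J := hs.le.trans (Nat.find_spec hex).1
  rw [(Nat.find_spec hex).2]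
  exact (prefixMin_le hsJ).lt_of_ne fun h => Nat.find_min hex hs ⟨hsJ, h.symm⟩

lemma image_prefixMin_Icc_subset (a b : ℕ) :
    prefixMin f '' Set.Icc a b ⊆
      insert (prefixMin f a) (f '' {t | a < t ∧ t ≤ b ∧ IsRecord f t}) := by
  rintro _ ⟨J, ⟨haJ, hJb⟩, rfl⟩
  obtain ⟨t, htJ, ht, heq⟩ := exists_isRecord_prefixMin_eq (f := f) J
  rcases le_or_gt t a with hta | hat
  · refine Or.inl (le_antisymm (prefixMin_antitone haJ) ?_)
    exact heq ▸ prefixMin_le hta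
  · exact Or.inr ⟨t, ⟨hat, htJ.trans hJb, ht⟩, heq.symm⟩

lemma ncard_image_prefixMin_Icc_le (a b : ℕ) :
    (prefixMin f '' Set.Icc a b).ncard ≤ {t | a < t ∧ t ≤ b ∧ IsRecord f t}.ncard + 1 := by
  have hfin : {t | a < t ∧ t ≤ b ∧ IsRecord f t}.Finite :=
    (Set.finite_Iic b).subset fun _ ht => ht.2.1
  calc (prefixMin f '' Set.Icc a b).ncard
      ≤ (insert (prefixMin f a) (f '' {t | a < t ∧ t ≤ b ∧ IsRecord f t})).ncard :=
        Set.ncard_le_ncard (image_prefixMin_Icc_subset a b) ((hfin.image f).insert _)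
    _ ≤ (f '' {t | a < t ∧ t ≤ b ∧ IsRecord f t}).ncard + 1 := Set.ncard_insert_le _ _
    _ ≤ {t | a < t ∧ t ≤ b ∧ IsRecord f t}.ncard + 1 := by gcongr; exact Set.ncard_image_le hfin

end PrefixMin

section Gaps

variable {d : ℕ} (M₀ : Matrix (Fin d) (Fin d) ℝ) (α : Fin d → ℝ)

noncomputable def latticeGap (j : ℕ) : ℝ := sInf (posLatticeDists M₀ ((j : ℝ) • α))

lemma isLeast_latticeGap [NeZero d] (hM : IsUnit M₀.det) (j : ℕ) :
    IsLeast (posLatticeDists M₀ ((j : ℝ) • α)) (latticeGap M₀ α j) := by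
  obtain ⟨r, hr⟩ := exists_isLeast_posLatticeDists M₀ hM ((j : ℝ) • α)
  rwa [latticeGap, hr.csInf_eq]

lemma deltaOne_eq_prefixMin_latticeGap [NeZero d] (hM : IsUnit M₀.det) {N n : ℕ} (h1 : 1 ≤ n)
    (h2 : n ≤ N) :
    deltaOne M₀ α N n = prefixMin (latticeGap M₀ α) (max (n - 1) (N - n)) := by
  have smul_sub {p q : ℕ} (h : q ≤ p) : (p : ℝ) • α - (q : ℝ) • α = ((p - q : ℕ) : ℝ) • α := by
    rw [Nat.cast_sub h, sub_smul]
  have sub_sub_neg {p q : ℕ} (h : q ≤ p) (w : Fin d → ℤ) :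
      (q : ℝ) • α - (p : ℝ) • α - latticeVec M₀ w =
        -(((p - q : ℕ) : ℝ) • α - latticeVec M₀ (-w)) := by
    rw [← smul_sub h, latticeVec_neg]; abel
  refine IsLeast.csInf_eq ⟨?_, ?_⟩
  · obtain ⟨t, htJ, -, heq⟩ := exists_isRecord_prefixMin_eq (f := latticeGap M₀ α)
      (max (n - 1) (N - n))
    obtain ⟨w, hw, hpos⟩ := (isLeast_latticeGap M₀ α hM t).1
    rw [heq]
    rcases le_or_gt t (n - 1) with ht | ht
    · refine ⟨n - t, w, by omega, by omega, ?_, hpos⟩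
      rw [hw, smul_sub (by omega : n - t ≤ n), Nat.sub_sub_self (by omega)]
      rfl
    · refine ⟨n + t, -w, by omega, by omega, ?_, hpos⟩
      rw [hw, sub_sub_neg (by omega : n ≤ n + t), neg_neg, Nat.add_sub_cancel_left]
      exact (l1Norm_neg _).symm
  · rintro r ⟨m, w, hm1, hmN, rfl, hpos⟩
    rcases le_total m n with hmn | hnm
    · rw [smul_sub hmn] at hpos ⊢
      exact (prefixMin_le (by omega)).trans ((isLeast_latticeGap M₀ α hM _).2 ⟨w, rfl, hpos⟩)
    · change 0 < l1Norm _ at hpos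
      change _ ≤ l1Norm _
      rw [sub_sub_neg hnm, l1Norm_neg] at hpos ⊢
      exact (prefixMin_le (by omega)).trans ((isLeast_latticeGap M₀ α hM _).2 ⟨-w, rfl, hpos⟩)

end Gaps

lemma max_l1Norm_lt_l1Norm_sub_of_isRecord {d : ℕ} [NeZero d] {M₀ : Matrix (Fin d) (Fin d) ℝ}
    (hM : IsUnit M₀.det) {α : Fin d → ℝ} {s t : ℕ} (hs : IsRecord (latticeGap M₀ α) s)
    (ht : IsRecord (latticeGap M₀ α) t) (hst : s < t) (hts : t < 2 * s) {ws wt : Fin d → ℤ}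
    (hws : latticeGap M₀ α s = l1Norm ((s : ℝ) • α - latticeVec M₀ ws))
    (hwt : latticeGap M₀ α t = l1Norm ((t : ℝ) • α - latticeVec M₀ wt)) :
    max (l1Norm ((s : ℝ) • α - latticeVec M₀ ws)) (l1Norm ((t : ℝ) • α - latticeVec M₀ wt)) <
      l1Norm (((s : ℝ) • α - latticeVec M₀ ws) - ((t : ℝ) • α - latticeVec M₀ wt)) := by
  have hgap : latticeGap M₀ α t < latticeGap M₀ α s := ht s hst
  have hdiff : ((t : ℝ) • α - latticeVec M₀ wt) - ((s : ℝ) • α - latticeVec M₀ ws) =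
      ((t - s : ℕ) : ℝ) • α - latticeVec M₀ (wt - ws) := by
    rw [Nat.cast_sub hst.le, sub_smul, latticeVec_sub]; abel
  have hpos : 0 < l1Norm (((t - s : ℕ) : ℝ) • α - latticeVec M₀ (wt - ws)) := by
    rw [← hdiff, l1Norm_pos_iff, sub_ne_zero]
    exact fun h => hgap.ne (by rw [hws, hwt, h])
  rw [← hws, ← hwt, max_eq_left hgap.le, l1Norm_sub_comm, hdiff]
  calc latticeGap M₀ α s < latticeGap M₀ α (t - s) := hs _ (by omega)
    _ ≤ _ := (isLeast_latticeGap M₀ α hM _).2 ⟨_, rfl, hpos⟩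

section Plane

lemma abs_add_abs_eq_max (a b : ℝ) : |a| + |b| = max |a + b| |a - b| := by
  rcases abs_cases a with ⟨ha, _⟩ | ⟨ha, _⟩ <;> rcases abs_cases b with ⟨hb, _⟩ | ⟨hb, _⟩ <;>
    rcases abs_cases (a + b) with ⟨hab, _⟩ | ⟨hab, _⟩ <;>
    rcases abs_cases (a - b) with ⟨hab', _⟩ | ⟨hab', _⟩ <;>
    rw [ha, hb, hab, hab'] <;> grind

lemma abs_sub_le_max_abs_abs_of_nonneg {a b : ℝ} (ha : 0 ≤ a) (hb : 0 ≤ b) :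
    |a - b| ≤ max |a| |b| := by
  rw [abs_of_nonneg ha, abs_of_nonneg hb]
  exact abs_sub_le_of_nonneg_of_le ha (le_max_left _ _) hb (le_max_right _ _)

lemma abs_sub_le_max_abs_abs {a b : ℝ} (h : 0 ≤ a ↔ 0 ≤ b) : |a - b| ≤ max |a| |b| := by
  by_cases ha : 0 ≤ a
  · exact abs_sub_le_max_abs_abs_of_nonneg ha (h.1 ha)
  · have hb : ¬0 ≤ b := mt h.2 ha
    have := abs_sub_le_max_abs_abs_of_nonneg (neg_nonneg.2 (not_le.1 ha).le)
      (neg_nonneg.2 (not_le.1 hb).le)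
    rwa [neg_sub_neg, abs_sub_comm, abs_neg, abs_neg] at this

lemma l1Norm_fin_two (v : Fin 2 → ℝ) : l1Norm v = max |v 0 + v 1| |v 0 - v 1| := by
  rw [l1Norm, Fin.sum_univ_two, abs_add_abs_eq_max]

noncomputable def quadrant (v : Fin 2 → ℝ) : Bool × Bool :=
  (decide (0 ≤ v 0 + v 1), decide (0 ≤ v 0 - v 1))

lemma l1Norm_sub_le_max_of_quadrant_eq {u v : Fin 2 → ℝ} (h : quadrant u = quadrant v) :
    l1Norm (u - v) ≤ max (l1Norm u) (l1Norm v) := by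
  have hsum : 0 ≤ u 0 + u 1 ↔ 0 ≤ v 0 + v 1 := by simpa [quadrant] using congrArg Prod.fst h
  have hdiff : 0 ≤ u 0 - u 1 ↔ 0 ≤ v 0 - v 1 := by simpa [quadrant] using congrArg Prod.snd h
  rw [l1Norm_fin_two, l1Norm_fin_two, l1Norm_fin_two, Pi.sub_apply, Pi.sub_apply]
  refine max_le ?_ ?_
  · calc |u 0 - v 0 + (u 1 - v 1)| = |(u 0 + u 1) - (v 0 + v 1)| := by ring_nf
      _ ≤ _ := (abs_sub_le_max_abs_abs hsum).trans
          (max_le_max (le_max_left _ _) (le_max_left _ _))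
  · calc |u 0 - v 0 - (u 1 - v 1)| = |(u 0 - u 1) - (v 0 - v 1)| := by ring_nf
      _ ≤ _ := (abs_sub_le_max_abs_abs hdiff).trans
          (max_le_max (le_max_right _ _) (le_max_right _ _))

lemma ncard_le_four_of_pairwise_max_l1Norm_lt {ι : Type*} {s : Set ι} (u : ι → Fin 2 → ℝ)
    (h : s.Pairwise fun i j => max (l1Norm (u i)) (l1Norm (u j)) < l1Norm (u i - u j)) :
    s.ncard ≤ 4 := by
  have hinj : s.InjOn (quadrant ∘ u) := fun i hi j hj hij => by
    by_contra hne
    exact (h hi hj hne).not_ge (l1Norm_sub_le_max_of_quadrant_eq hij)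
  calc s.ncard ≤ (Set.univ : Set (Bool × Bool)).ncard :=
        Set.ncard_le_ncard_of_injOn _ (fun _ _ => Set.mem_univ _) hinj Set.finite_univ
    _ = 4 := by simp [Set.ncard_univ]

end Plane

lemma ncard_setOf_isRecord_latticeGap_le_four {M₀ : Matrix (Fin 2) (Fin 2) ℝ}
    (hM : IsUnit M₀.det) (α : Fin 2 → ℝ) {a b : ℕ} (hab : b ≤ 2 * a) :
    {t | a < t ∧ t ≤ b ∧ IsRecord (latticeGap M₀ α) t}.ncard ≤ 4 := by
  choose w hw using fun t => (isLeast_latticeGap M₀ α hM t).1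
  have far : ∀ {s t}, a < s → IsRecord (latticeGap M₀ α) s → t ≤ b →
      IsRecord (latticeGap M₀ α) t → s < t → _ := fun has hs htb ht hst =>
    max_l1Norm_lt_l1Norm_sub_of_isRecord hM hs ht hst (by omega) (hw _).1 (hw _).1
  refine ncard_le_four_of_pairwise_max_l1Norm_lt (fun t => (t : ℝ) • α - latticeVec M₀ (w t)) ?_
  rintro s ⟨has, hsb, hs⟩ t ⟨hat, htb, ht⟩ hne
  rcases hne.lt_or_gt with hst | hts
  · exact far has hs htb ht hst
  · exact (max_comm _ _).trans_lt ((far hat ht hsb hs hts).trans_eq (l1Norm_sub_comm _ _))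

theorem gapsBound_manhattan_dim2_general (M₀ : Matrix (Fin 2) (Fin 2) ℝ) (hM₀ : M₀.det = 1)
    (α : Fin 2 → ℝ) (N : ℕ) :
    gOne M₀ α N ≤ 5 := by
  have hM : IsUnit M₀.det := hM₀ ▸ isUnit_one
  have hsub : {x | ∃ n, 1 ≤ n ∧ n ≤ N ∧ x = deltaOne M₀ α N n} ⊆
      prefixMin (latticeGap M₀ α) '' Set.Icc (N / 2) (N - 1) := by
    rintro _ ⟨n, h1, h2, rfl⟩
    exact ⟨_, ⟨by omega, by omega⟩, (deltaOne_eq_prefixMin_latticeGap M₀ α hM h1 h2).symm⟩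
  calc gOne M₀ α N ≤ (prefixMin (latticeGap M₀ α) '' Set.Icc (N / 2) (N - 1)).ncard :=
        Set.ncard_le_ncard hsub ((Set.finite_Icc _ _).image _)
    _ ≤ {t | N / 2 < t ∧ t ≤ N - 1 ∧ IsRecord (latticeGap M₀ α) t}.ncard + 1 :=
        ncard_image_prefixMin_Icc_le _ _
    _ ≤ 5 := by
        have := ncard_setOf_isRecord_latticeGap_le_four hM α (a := N / 2) (b := N - 1) (by omega)
        omega

/-- For `d = 2`, any unimodular lattice `L = ℤ² M₀` in `ℝ²`, any `α ∈ ℝ²` and any integer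
`N ≥ 1`, the number of distinct nearest-neighbour distances with respect to the Manhattan
(ℓ¹) metric satisfies `g_N^{ℓ¹}(α, L) ≤ 5`. -/
theorem gapsBound_manhattan_dim2 (M₀ : Matrix (Fin 2) (Fin 2) ℝ) (hM₀ : M₀.det = 1)
    (α : Fin 2 → ℝ) (N : ℕ) (hN : 1 ≤ N) :
    gOne M₀ α N ≤ 5 :=
  gapsBound_manhattan_dim2_general M₀ hM₀ α N
end

section
/- Let d ≥ 1, let L be a unimodular lattice in ℝ^d with L = ℤ^d M₀ for M₀ ∈ SL(d,ℝ), let α ∈ ℝ^d, let N ≥ 1 be an integer and set N₊ = N + 1/2. Then g_N*(α,L) = #{ F( A_{N₊}(α), n/N₊ ) : 1 ≤ n ≤ N } ≤ #{ F( A_{N₊}(α), t ) : t ∈ (0,1) }. -/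
open Matrix Set

/-- The point of the lattice `ℤ^{d+1} M` corresponding to the integer row vector `w`
(row vectors acting on the right). -/
noncomputable def latPoint {d : ℕ} (M : Matrix (Fin (d + 1)) (Fin (d + 1)) ℝ)
    (w : Fin (d + 1) → ℤ) : Fin (d + 1) → ℝ :=
  (fun i => (w i : ℝ)) ᵥ* M

/-- For a point `x = (u, v) ∈ ℝ^{d+1}`, `vpart x = v ∈ ℝ^d` is the vector of the last `d`
coordinates (the first coordinate `x 0` being `u`). -/
def vpart {d : ℕ} (x : Fin (d + 1) → ℝ) : Fin d → ℝ := fun i => x i.succ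

/-- The set `S(M, t) = { ‖v‖_∞ : (u, v) ∈ ℤ^{d+1} M, ‖v‖_∞ > 0, −t < u < 1 − t }`.
(The norm on `Fin d → ℝ` is the maximum norm.) -/
noncomputable def FSet (d : ℕ) (M : Matrix (Fin (d + 1)) (Fin (d + 1)) ℝ) (t : ℝ) :
    Set ℝ :=
  { r : ℝ | ∃ w : Fin (d + 1) → ℤ, r = ‖vpart (latPoint M w)‖ ∧ 0 < r ∧
      -t < latPoint M w 0 ∧ latPoint M w 0 < 1 - t }

/-- `F(M, t) = min S(M, t)`. -/
noncomputable def Fval (d : ℕ) (M : Matrix (Fin (d + 1)) (Fin (d + 1)) ℝ) (t : ℝ) : ℝ :=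
  sInf (FSet d M t)

/-- Reindex a block matrix over `Fin 1 ⊕ Fin d` as a matrix over `Fin (d + 1)` (the `Fin 1`
block corresponding to the first coordinate). -/
def blockEmbed (d : ℕ) (B : Matrix (Fin 1 ⊕ Fin d) (Fin 1 ⊕ Fin d) ℝ) :
    Matrix (Fin (d + 1)) (Fin (d + 1)) ℝ :=
  Matrix.reindex (finSumFinEquiv.trans (finCongr (Nat.add_comm 1 d)))
    (finSumFinEquiv.trans (finCongr (Nat.add_comm 1 d))) B

/-- The matrix `A_s(α) = [[1, 0], [0, M₀]] · [[1, α], [0, 1_d]] · [[s⁻¹, 0], [0, s^{1/d}·1_d]]`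
in `SL(d+1, ℝ)`, with `α` a row vector. -/
noncomputable def AMat (d : ℕ) (M₀ : Matrix (Fin d) (Fin d) ℝ) (α : Fin d → ℝ) (s : ℝ) :
    Matrix (Fin (d + 1)) (Fin (d + 1)) ℝ :=
  blockEmbed d (Matrix.fromBlocks 1 0 0 M₀) *
  blockEmbed d (Matrix.fromBlocks 1 (Matrix.of fun _ j => α j) 0 1) *
  blockEmbed d (Matrix.fromBlocks (Matrix.of fun _ _ => s⁻¹) 0 0
    ((s ^ ((1 : ℝ) / (d : ℝ))) • 1))


open Pointwise

def eqv (d : ℕ) : (Fin 1 ⊕ Fin d) ≃ Fin (d+1) :=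
  finSumFinEquiv.trans (finCongr (Nat.add_comm 1 d))

lemma eqv_inl (d : ℕ) : eqv d (Sum.inl 0) = 0 := by
  apply Fin.ext; simp [eqv]

lemma eqv_inr (d : ℕ) (i : Fin d) : eqv d (Sum.inr i) = i.succ := by
  apply Fin.ext; simp [eqv, Nat.add_comm]

lemma eqv_symm_zero (d : ℕ) : (eqv d).symm 0 = Sum.inl 0 := by
  rw [Equiv.symm_apply_eq, eqv_inl]

lemma eqv_symm_succ (d : ℕ) (i : Fin d) : (eqv d).symm i.succ = Sum.inr i := by
  rw [Equiv.symm_apply_eq, eqv_inr]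

lemma blockEmbed_eq (d : ℕ) (B : Matrix (Fin 1 ⊕ Fin d) (Fin 1 ⊕ Fin d) ℝ) :
    blockEmbed d B = Matrix.reindex (eqv d) (eqv d) B := rfl

lemma AMat_blocks (d : ℕ) (M₀ : Matrix (Fin d) (Fin d) ℝ) (α : Fin d → ℝ) (s : ℝ) :
    AMat d M₀ α s = blockEmbed d (Matrix.fromBlocks (Matrix.of fun _ _ => s⁻¹)
      ((s ^ ((1:ℝ)/(d:ℝ))) • Matrix.of fun _ j => α j) 0 ((s ^ ((1:ℝ)/(d:ℝ))) • M₀)) := by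
  unfold AMat
  rw [blockEmbed_eq, blockEmbed_eq, blockEmbed_eq, blockEmbed_eq]
  simp only [Matrix.reindex_apply, Matrix.submatrix_mul_equiv]
  congr 1
  rw [Matrix.fromBlocks_multiply, Matrix.fromBlocks_multiply]
  ext i j' <;> rcases i with i|i <;> rcases j' with j'|j' <;>
    simp [Matrix.mul_smul, Matrix.smul_mul]

lemma latPoint_blockEmbed (d : ℕ) (B : Matrix (Fin 1 ⊕ Fin d) (Fin 1 ⊕ Fin d) ℝ)
    (w : Fin (d+1) → ℤ) (j : Fin (d+1)) :
    latPoint (blockEmbed d B) w j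
      = (((fun k => (w (eqv d k) : ℝ)) ᵥ* B)) ((eqv d).symm j) := by
  unfold latPoint
  rw [blockEmbed_eq, Matrix.reindex_apply, Matrix.submatrix_vecMul_equiv]
  rfl

lemma latPoint_AMat_zero (d : ℕ) (M₀ : Matrix (Fin d) (Fin d) ℝ) (α : Fin d → ℝ) (s : ℝ)
    (w : Fin (d+1) → ℤ) :
    latPoint (AMat d M₀ α s) w 0 = (w 0 : ℝ) * s⁻¹ := by
  rw [AMat_blocks, latPoint_blockEmbed, eqv_symm_zero, Matrix.vecMul_fromBlocks]
  simp [Matrix.vecMul, dotProduct, eqv_inl]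

lemma latPoint_AMat_succ (d : ℕ) (M₀ : Matrix (Fin d) (Fin d) ℝ) (α : Fin d → ℝ) (s : ℝ)
    (w : Fin (d+1) → ℤ) (i : Fin d) :
    latPoint (AMat d M₀ α s) w i.succ
      = s ^ ((1:ℝ)/(d:ℝ)) * ((w 0 : ℝ) * α i + latticeVec M₀ (fun j => w j.succ) i) := by
  rw [AMat_blocks, latPoint_blockEmbed, eqv_symm_succ, Matrix.vecMul_fromBlocks]
  simp only [Sum.elim_inr, Pi.add_apply]
  have h1 : ((fun k => (w (eqv d k) : ℝ)) ∘ Sum.inl ᵥ*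
      (s ^ ((1:ℝ)/(d:ℝ)) • Matrix.of fun _ j => α j)) i
      = s ^ ((1:ℝ)/(d:ℝ)) * ((w 0 : ℝ) * α i) := by
    simp [Matrix.vecMul, dotProduct, eqv_inl, Matrix.smul_apply]
    ring
  have h2 : ((fun k => (w (eqv d k) : ℝ)) ∘ Sum.inr ᵥ* (s ^ ((1:ℝ)/(d:ℝ)) • M₀)) i
      = s ^ ((1:ℝ)/(d:ℝ)) * latticeVec M₀ (fun j => w j.succ) i := by
    simp only [latticeVec, Matrix.vecMul, dotProduct, Function.comp,
      Matrix.smul_apply, smul_eq_mul, Finset.mul_sum, eqv_inr]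
    exact Finset.sum_congr rfl fun j _ => by ring
  rw [h1, h2]
  ring

lemma vpart_AMat (d : ℕ) (M₀ : Matrix (Fin d) (Fin d) ℝ) (α : Fin d → ℝ) (s : ℝ)
    (w : Fin (d+1) → ℤ) :
    vpart (latPoint (AMat d M₀ α s) w)
      = s ^ ((1:ℝ)/(d:ℝ)) • ((w 0 : ℝ) • α + latticeVec M₀ (fun j => w j.succ)) := by
  funext i
  rw [vpart, latPoint_AMat_succ]
  simp [smul_eq_mul]

lemma norm_vpart_AMat (d : ℕ) (M₀ : Matrix (Fin d) (Fin d) ℝ) (α : Fin d → ℝ) {s : ℝ}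
    (hs : 0 < s) (w : Fin (d+1) → ℤ) :
    ‖vpart (latPoint (AMat d M₀ α s) w)‖
      = s ^ ((1:ℝ)/(d:ℝ)) * ‖(w 0 : ℝ) • α + latticeVec M₀ (fun j => w j.succ)‖ := by
  rw [vpart_AMat, norm_smul, Real.norm_eq_abs,
    abs_of_pos (Real.rpow_pos_of_pos hs _)]

/-- `FSet` for `AMat` in terms of integer data. -/
def FSetI {d : ℕ} (M₀ : Matrix (Fin d) (Fin d) ℝ) (α : Fin d → ℝ) (c : ℝ) (a b : ℤ) :
    Set ℝ :=
  { r : ℝ | ∃ (p : ℤ) (q : Fin d → ℤ),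
      r = c * ‖(p : ℝ) • α + latticeVec M₀ q‖ ∧ 0 < r ∧ a < p ∧ p < b }

lemma FSet_AMat (d : ℕ) (M₀ : Matrix (Fin d) (Fin d) ℝ) (α : Fin d → ℝ) {s : ℝ}
    (hs : 0 < s) (t : ℝ) :
    FSet d (AMat d M₀ α s) t
      = FSetI M₀ α (s ^ ((1:ℝ)/(d:ℝ))) ⌊-(t*s)⌋ ⌈s - t*s⌉ := by
  ext r
  constructor
  · rintro ⟨w, hr, hr0, h1, h2⟩
    rw [latPoint_AMat_zero] at h1 h2
    refine ⟨w 0, fun j => w j.succ, ?_, hr0, ?_, ?_⟩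
    · rw [hr, norm_vpart_AMat d M₀ α hs]
    · rw [Int.floor_lt]
      have := (lt_div_iff₀ hs).mp (by rw [div_eq_mul_inv] at *; linarith : -t < (w 0 : ℝ) / s)
      linarith
    · rw [Int.lt_ceil]
      have := (div_lt_iff₀ hs).mp (by rw [div_eq_mul_inv] at *; linarith : (w 0 : ℝ) / s < 1 - t)
      nlinarith
  · rintro ⟨p, q, hr, hr0, ha, hb⟩
    rw [Int.floor_lt] at ha
    rw [Int.lt_ceil] at hb
    refine ⟨Fin.cons p q, ?_, hr0, ?_, ?_⟩
    · rw [norm_vpart_AMat d M₀ α hs]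
      simpa using hr
    · rw [latPoint_AMat_zero]
      simp only [Fin.cons_zero]
      rw [show (p:ℝ) * s⁻¹ = (p:ℝ)/s from (div_eq_mul_inv _ _).symm, lt_div_iff₀ hs]
      linarith
    · rw [latPoint_AMat_zero]
      simp only [Fin.cons_zero]
      rw [show (p:ℝ) * s⁻¹ = (p:ℝ)/s from (div_eq_mul_inv _ _).symm, div_lt_iff₀ hs]
      nlinarith

lemma norm_shift {d : ℕ} (M₀ : Matrix (Fin d) (Fin d) ℝ) (α : Fin d → ℝ)
    (n m : ℕ) (w : Fin d → ℤ) (p : ℤ) (hp : (p : ℝ) = (m : ℝ) - (n : ℝ)) :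
    ‖(n : ℝ) • α - (m : ℝ) • α - latticeVec M₀ w‖ = ‖(p : ℝ) • α + latticeVec M₀ w‖ := by
  have : (n : ℝ) • α - (m : ℝ) • α - latticeVec M₀ w
      = -((p : ℝ) • α + latticeVec M₀ w) := by
    rw [hp]; module
  rw [this, norm_neg]

lemma FSetI_eq_image {d : ℕ} (M₀ : Matrix (Fin d) (Fin d) ℝ) (α : Fin d → ℝ)
    (N n : ℕ) (hn1 : 1 ≤ n) (hnN : n ≤ N) {c : ℝ} (hc : 0 < c) :
    FSetI M₀ α c (-(n : ℤ)) ((N : ℤ) - n + 1)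
      = (fun x => c * x) ''
        { r : ℝ | ∃ (m : ℕ) (w : Fin d → ℤ), 1 ≤ m ∧ m ≤ N ∧
          r = ‖(n : ℝ) • α - (m : ℝ) • α - latticeVec M₀ w‖ ∧ 0 < r } := by
  ext x
  constructor
  · rintro ⟨p, q, hr, hr0, ha, hb⟩
    have hx0 : (0:ℝ) < ‖(p : ℝ) • α + latticeVec M₀ q‖ := by
      rcases lt_or_ge 0 (‖(p : ℝ) • α + latticeVec M₀ q‖) with h | h
      · exact h
      · exfalso; nlinarith
    set m : ℕ := (p + n).toNat with hm
    have hmz : (m : ℤ) = p + n := Int.toNat_of_nonneg (by omega)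
    refine ⟨‖(n : ℝ) • α - (m : ℝ) • α - latticeVec M₀ q‖, ⟨m, q, by omega, by omega, rfl, ?_⟩, ?_⟩
    · rw [norm_shift M₀ α n m q p (by exact_mod_cast (by omega : p = (m:ℤ) - (n:ℤ)))]
      exact hx0
    · rw [norm_shift M₀ α n m q p (by exact_mod_cast (by omega : p = (m:ℤ) - (n:ℤ)))]
      exact hr.symm
  · rintro ⟨r, ⟨m, w, h1, h2, hre, hr0⟩, rfl⟩
    refine ⟨(m : ℤ) - n, w, ?_, by positivity, by omega, by omega⟩
    rw [hre, norm_shift M₀ α n m w ((m:ℤ) - n) (by push_cast; ring)]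

lemma Fval_AMat {d : ℕ} (M₀ : Matrix (Fin d) (Fin d) ℝ) (α : Fin d → ℝ)
    (N n : ℕ) (hn1 : 1 ≤ n) (hnN : n ≤ N) :
    Fval d (AMat d M₀ α ((N : ℝ) + 1/2)) ((n : ℝ) / ((N : ℝ) + 1/2))
      = (((N : ℝ) + 1/2) ^ ((1:ℝ)/(d:ℝ))) * deltaStar M₀ α N n := by
  have hs : (0:ℝ) < (N : ℝ) + 1/2 := by positivity
  have hc : (0:ℝ) < ((N : ℝ) + 1/2) ^ ((1:ℝ)/(d:ℝ)) := Real.rpow_pos_of_pos hs _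
  have hts : (n : ℝ) / ((N : ℝ) + 1/2) * ((N : ℝ) + 1/2) = (n : ℝ) :=
    div_mul_cancel₀ _ hs.ne'
  rw [Fval, FSet_AMat d M₀ α hs, hts]
  have hfl : ⌊-(n : ℝ)⌋ = -(n : ℤ) := by
    rw [show -(n:ℝ) = ((-(n:ℤ) : ℤ) : ℝ) by push_cast; ring, Int.floor_intCast]
  have hcl : ⌈(N : ℝ) + 1/2 - (n : ℝ)⌉ = (N : ℤ) - n + 1 := by
    have hn' : (n:ℝ) ≤ (N:ℝ) := by exact_mod_cast hnN
    rw [Int.ceil_eq_iff]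
    constructor <;> push_cast <;> linarith
  rw [hfl, hcl, FSetI_eq_image M₀ α N n hn1 hnN hc]
  have himg : (fun x => (((N : ℝ) + 1/2) ^ ((1:ℝ)/(d:ℝ))) * x) ''
      { r : ℝ | ∃ (m : ℕ) (w : Fin d → ℤ), 1 ≤ m ∧ m ≤ N ∧
        r = ‖(n : ℝ) • α - (m : ℝ) • α - latticeVec M₀ w‖ ∧ 0 < r }
      = (((N : ℝ) + 1/2) ^ ((1:ℝ)/(d:ℝ))) •
        { r : ℝ | ∃ (m : ℕ) (w : Fin d → ℤ), 1 ≤ m ∧ m ≤ N ∧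
          r = ‖(n : ℝ) • α - (m : ℝ) • α - latticeVec M₀ w‖ ∧ 0 < r } := by
    ext y; simp [Set.mem_smul_set, smul_eq_mul]
  rw [himg, Real.sInf_smul_of_nonneg hc.le, smul_eq_mul, deltaStar]

/-- Let `d ≥ 1`, `L = ℤ^d M₀` a unimodular lattice, `α ∈ ℝ^d`, `N ≥ 1` an integer, and set
`N₊ = N + 1/2`.  Then
`g_N^*(α, L) = #{ F(A_{N₊}(α), n/N₊) : 1 ≤ n ≤ N } ≤ #{ F(A_{N₊}(α), t) : t ∈ (0, 1) }`. -/
theorem gStar_eq_card_Fval (d : ℕ) (hd : 1 ≤ d)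
    (M₀ : Matrix (Fin d) (Fin d) ℝ) (hM₀ : M₀.det = 1)
    (α : Fin d → ℝ) (N : ℕ) (hN : 1 ≤ N) :
    gStar M₀ α N =
      { x : ℝ | ∃ n : ℕ, 1 ≤ n ∧ n ≤ N ∧
          x = Fval d (AMat d M₀ α ((N : ℝ) + 1/2)) ((n : ℝ) / ((N : ℝ) + 1/2)) }.ncard ∧
    { x : ℝ | ∃ n : ℕ, 1 ≤ n ∧ n ≤ N ∧
        x = Fval d (AMat d M₀ α ((N : ℝ) + 1/2)) ((n : ℝ) / ((N : ℝ) + 1/2)) }.ncard ≤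
      { x : ℝ | ∃ t : ℝ, 0 < t ∧ t < 1 ∧
          x = Fval d (AMat d M₀ α ((N : ℝ) + 1/2)) t }.ncard := by
  have hs : (0:ℝ) < (N : ℝ) + 1/2 := by positivity
  have hc : (0:ℝ) < ((N : ℝ) + 1/2) ^ ((1:ℝ)/(d:ℝ)) := Real.rpow_pos_of_pos hs _
  have hB : { x : ℝ | ∃ n : ℕ, 1 ≤ n ∧ n ≤ N ∧
        x = Fval d (AMat d M₀ α ((N : ℝ) + 1/2)) ((n : ℝ) / ((N : ℝ) + 1/2)) }
      = (fun x => (((N : ℝ) + 1/2) ^ ((1:ℝ)/(d:ℝ))) * x) ''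
        { x : ℝ | ∃ n : ℕ, 1 ≤ n ∧ n ≤ N ∧ x = deltaStar M₀ α N n } := by
    ext x
    constructor
    · rintro ⟨n, h1, h2, rfl⟩
      exact ⟨deltaStar M₀ α N n, ⟨n, h1, h2, rfl⟩, (Fval_AMat M₀ α N n h1 h2).symm⟩
    · rintro ⟨y, ⟨n, h1, h2, rfl⟩, rfl⟩
      exact ⟨n, h1, h2, (Fval_AMat M₀ α N n h1 h2).symm⟩
  constructor
  · rw [gStar, hB, Set.ncard_image_of_injective _ (mul_right_injective₀ hc.ne')]
  · have hsub1 : { x : ℝ | ∃ n : ℕ, 1 ≤ n ∧ n ≤ N ∧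
        x = Fval d (AMat d M₀ α ((N : ℝ) + 1/2)) ((n : ℝ) / ((N : ℝ) + 1/2)) }
        ⊆ { x : ℝ | ∃ t : ℝ, 0 < t ∧ t < 1 ∧
          x = Fval d (AMat d M₀ α ((N : ℝ) + 1/2)) t } := by
      rintro x ⟨n, h1, h2, rfl⟩
      have hn0 : (0:ℝ) < (n:ℝ) := by exact_mod_cast h1
      have hnN : (n:ℝ) ≤ (N:ℝ) := by exact_mod_cast h2
      exact ⟨(n : ℝ) / ((N : ℝ) + 1/2), div_pos hn0 hs, (div_lt_one hs).mpr (by linarith), rfl⟩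
    have hsub2 : { x : ℝ | ∃ t : ℝ, 0 < t ∧ t < 1 ∧
          x = Fval d (AMat d M₀ α ((N : ℝ) + 1/2)) t }
        ⊆ (fun ab : ℤ × ℤ => sInf (FSetI M₀ α (((N : ℝ) + 1/2) ^ ((1:ℝ)/(d:ℝ))) ab.1 ab.2)) ''
          ((Set.Icc (-(N:ℤ)-1) 0) ×ˢ (Set.Icc (0:ℤ) ((N:ℤ)+1))) := by
      rintro x ⟨t, ht0, ht1, rfl⟩
      refine ⟨(⌊-(t*((N:ℝ)+1/2))⌋, ⌈((N : ℝ) + 1/2) - t*((N:ℝ)+1/2)⌉), ⟨?_, ?_⟩, ?_⟩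
      · rw [Set.mem_Icc]
        constructor
        · rw [Int.le_floor]; push_cast; nlinarith
        · calc ⌊-(t*((N:ℝ)+1/2))⌋ ≤ ⌊(0:ℝ)⌋ := Int.floor_le_floor (by nlinarith)
            _ = 0 := Int.floor_zero
      · rw [Set.mem_Icc]
        exact ⟨Int.ceil_nonneg (by nlinarith), by rw [Int.ceil_le]; push_cast; nlinarith⟩
      · rw [Fval, FSet_AMat d M₀ α hs t]
    exact Set.ncard_le_ncard hsub1
      ((((Set.finite_Icc _ _).prod (Set.finite_Icc _ _)).image _).subset hsub2)
end

section
/- Let d ≥ 1 and M ∈ SL(d+1,ℝ). Suppose (u₁,v₁) and (u₂,v₂) are points of the lattice ℤ^{d+1}M with u₁, u₂ ∈ (−1,1) and 0 < ‖v₁‖_∞ < ‖v₂‖_∞, and suppose that the vectors sgn(u₁)·v₁ and sgn(u₂)·v₂ lie in the same closed orthant of ℝ^d (i.e., (sgn(u₁)v₁)_k · (sgn(u₂)v₂)_k ≥ 0 for every coordinate k). Then F(M,t) ≤ ‖v₂‖_∞ for all t ∈ (0,1). -/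
open Matrix Set

lemma latPoint_sub {d : ℕ} (M : Matrix (Fin (d + 1)) (Fin (d + 1)) ℝ)
    (w w' : Fin (d + 1) → ℤ) : latPoint M (w - w') = latPoint M w - latPoint M w' := by
  unfold latPoint
  have h : (fun i => (((w - w') i : ℤ) : ℝ)) = (fun i => ((w i : ℤ) : ℝ)) - fun i => ((w' i : ℤ) : ℝ) := by
    funext i; simp
  rw [h, Matrix.sub_vecMul]

lemma latPoint_neg {d : ℕ} (M : Matrix (Fin (d + 1)) (Fin (d + 1)) ℝ)
    (w : Fin (d + 1) → ℤ) : latPoint M (-w) = - latPoint M w := by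
  unfold latPoint
  have h : (fun i => (((-w) i : ℤ) : ℝ)) = -fun i => ((w i : ℤ) : ℝ) := by
    funext i; simp
  rw [h, Matrix.neg_vecMul]

lemma vpart_neg {d : ℕ} (x : Fin (d + 1) → ℝ) : vpart (-x) = -vpart x := rfl

lemma vpart_sub {d : ℕ} (x y : Fin (d + 1) → ℝ) : vpart (x - y) = vpart x - vpart y := rfl

lemma Fval_le_mem (d : ℕ) (M : Matrix (Fin (d + 1)) (Fin (d + 1)) ℝ) (t : ℝ)
    (w : Fin (d + 1) → ℤ) (h1 : -t < latPoint M w 0) (h2 : latPoint M w 0 < 1 - t)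
    (h0 : 0 < ‖vpart (latPoint M w)‖) :
    Fval d M t ≤ ‖vpart (latPoint M w)‖ := by
  apply csInf_le
  · exact ⟨0, fun r hr => by obtain ⟨w', _, h0', _⟩ := hr; exact h0'.le⟩
  · exact ⟨w, rfl, h0, h1, h2⟩

lemma diff_bounds {d : ℕ} (v₁ v₂ : Fin d → ℝ) (h : ‖v₁‖ < ‖v₂‖)
    (horth : ∀ k, 0 ≤ v₁ k * v₂ k) : 0 < ‖v₂ - v₁‖ ∧ ‖v₂ - v₁‖ ≤ ‖v₂‖ := by
  constructor
  · have := norm_sub_norm_le v₂ v₁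
    linarith
  · rw [pi_norm_le_iff_of_nonneg (norm_nonneg v₂)]
    intro k
    have h1 : |v₁ k| ≤ ‖v₂‖ := le_trans (norm_le_pi_norm v₁ k) h.le
    have h2 : |v₂ k| ≤ ‖v₂‖ := norm_le_pi_norm v₂ k
    have h3 := horth k
    have h1' := abs_le.mp h1
    have h2' := abs_le.mp h2
    rw [Pi.sub_apply, Real.norm_eq_abs, abs_le]
    constructor <;> nlinarith [h1'.1, h1'.2, h2'.1, h2'.2]

lemma aux_pos (d : ℕ) (M : Matrix (Fin (d + 1)) (Fin (d + 1)) ℝ)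
    (w₁ w₂ : Fin (d + 1) → ℤ)
    (ha0 : 0 < latPoint M w₁ 0) (ha1 : latPoint M w₁ 0 < 1)
    (hb0 : 0 < latPoint M w₂ 0) (hb1 : latPoint M w₂ 0 < 1)
    (hv₁ : 0 < ‖vpart (latPoint M w₁)‖)
    (hv₁₂ : ‖vpart (latPoint M w₁)‖ < ‖vpart (latPoint M w₂)‖)
    (horth : ∀ k, 0 ≤ vpart (latPoint M w₁) k * vpart (latPoint M w₂) k)
    (t : ℝ) (ht0 : 0 < t) (ht1 : t < 1) :
    Fval d M t ≤ ‖vpart (latPoint M w₂)‖ := by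
  by_cases hb : latPoint M w₂ 0 < 1 - t
  · exact Fval_le_mem d M t w₂ (by linarith) hb (hv₁.trans hv₁₂)
  · by_cases ha : latPoint M w₁ 0 < 1 - t
    · exact (Fval_le_mem d M t w₁ (by linarith) ha hv₁).trans hv₁₂.le
    · push_neg at hb ha
      by_cases hba : latPoint M w₂ 0 ≤ latPoint M w₁ 0
      · -- use w₂ - w₁
        have hl : latPoint M (w₂ - w₁) 0 = latPoint M w₂ 0 - latPoint M w₁ 0 := by
          rw [latPoint_sub]; rfl
        have hvp : vpart (latPoint M (w₂ - w₁)) = vpart (latPoint M w₂) - vpart (latPoint M w₁) := by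
          rw [latPoint_sub, vpart_sub]
        obtain ⟨hpos, hle⟩ := diff_bounds _ _ hv₁₂ horth
        have := Fval_le_mem d M t (w₂ - w₁) (by rw [hl]; linarith) (by rw [hl]; linarith)
          (by rw [hvp]; exact hpos)
        rw [hvp] at this
        exact this.trans hle
      · push_neg at hba
        have hl : latPoint M (w₁ - w₂) 0 = latPoint M w₁ 0 - latPoint M w₂ 0 := by
          rw [latPoint_sub]; rfl
        have hvp : vpart (latPoint M (w₁ - w₂)) = vpart (latPoint M w₁) - vpart (latPoint M w₂) := by
          rw [latPoint_sub, vpart_sub]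
        obtain ⟨hpos, hle⟩ := diff_bounds _ _ hv₁₂ horth
        rw [← norm_sub_rev] at hpos hle
        have := Fval_le_mem d M t (w₁ - w₂) (by rw [hl]; linarith) (by rw [hl]; linarith)
          (by rw [hvp]; exact hpos)
        rw [hvp] at this
        exact this.trans hle

/-- Suppose `(u₁, v₁)` and `(u₂, v₂)` are points of the lattice `ℤ^{d+1} M` with
`u₁, u₂ ∈ (−1, 1)` and `0 < ‖v₁‖_∞ < ‖v₂‖_∞`, and suppose that `sgn(u₁) v₁` and
`sgn(u₂) v₂` lie in the same closed orthant of `ℝ^d`.  Then `F(M, t) ≤ ‖v₂‖_∞` for all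
`t ∈ (0, 1)`. -/
theorem Fval_le_of_same_orthant (d : ℕ) (hd : 1 ≤ d)
    (M : Matrix (Fin (d + 1)) (Fin (d + 1)) ℝ) (hM : M.det = 1)
    (w₁ w₂ : Fin (d + 1) → ℤ)
    (hu₁ : latPoint M w₁ 0 ∈ Set.Ioo (-1 : ℝ) 1)
    (hu₂ : latPoint M w₂ 0 ∈ Set.Ioo (-1 : ℝ) 1)
    (hv₁ : 0 < ‖vpart (latPoint M w₁)‖)
    (hv₁₂ : ‖vpart (latPoint M w₁)‖ < ‖vpart (latPoint M w₂)‖)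
    (horth : ∀ k : Fin d,
      0 ≤ (Real.sign (latPoint M w₁ 0) * vpart (latPoint M w₁) k) *
          (Real.sign (latPoint M w₂ 0) * vpart (latPoint M w₂) k)) :
    ∀ t : ℝ, 0 < t → t < 1 → Fval d M t ≤ ‖vpart (latPoint M w₂)‖ := by
  intro t ht0 ht1
  obtain ⟨haL, haR⟩ := hu₁
  obtain ⟨hbL, hbR⟩ := hu₂
  rcases eq_or_ne (latPoint M w₁ 0) 0 with ha0 | ha0
  · exact (Fval_le_mem d M t w₁ (by rw [ha0]; linarith) (by rw [ha0]; linarith) hv₁).trans hv₁₂.le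
  rcases eq_or_ne (latPoint M w₂ 0) 0 with hb0 | hb0
  · exact Fval_le_mem d M t w₂ (by rw [hb0]; linarith) (by rw [hb0]; linarith) (hv₁.trans hv₁₂)
  -- helpers for negated points
  have hneg1 : latPoint M (-w₁) 0 = -(latPoint M w₁ 0) := by rw [latPoint_neg]; rfl
  have hneg2 : latPoint M (-w₂) 0 = -(latPoint M w₂ 0) := by rw [latPoint_neg]; rfl
  have hvn1 : vpart (latPoint M (-w₁)) = -vpart (latPoint M w₁) := by rw [latPoint_neg, vpart_neg]
  have hvn2 : vpart (latPoint M (-w₂)) = -vpart (latPoint M w₂) := by rw [latPoint_neg, vpart_neg]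
  rcases ha0.lt_or_gt with ha | ha <;> rcases hb0.lt_or_gt with hb | hb
  · -- a < 0, b < 0 : use -w₁, -w₂
    have := aux_pos d M (-w₁) (-w₂)
      (by rw [hneg1]; linarith) (by rw [hneg1]; linarith)
      (by rw [hneg2]; linarith) (by rw [hneg2]; linarith)
      (by rw [hvn1, norm_neg]; exact hv₁)
      (by rw [hvn1, hvn2, norm_neg, norm_neg]; exact hv₁₂)
      (fun k => by
        have h := horth k
        rw [Real.sign_of_neg ha, Real.sign_of_neg hb] at h
        rw [hvn1, hvn2]
        simpa using h)
      t ht0 ht1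
    rw [hvn2, norm_neg] at this
    exact this
  · -- a < 0, b > 0 : use -w₁, w₂
    exact aux_pos d M (-w₁) w₂
      (by rw [hneg1]; linarith) (by rw [hneg1]; linarith) hb hbR
      (by rw [hvn1, norm_neg]; exact hv₁)
      (by rw [hvn1, norm_neg]; exact hv₁₂)
      (fun k => by
        have h := horth k
        rw [Real.sign_of_neg ha, Real.sign_of_pos hb] at h
        rw [hvn1]
        simpa using h)
      t ht0 ht1
  · -- a > 0, b < 0 : use w₁, -w₂
    have := aux_pos d M w₁ (-w₂) ha haR
      (by rw [hneg2]; linarith) (by rw [hneg2]; linarith) hv₁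
      (by rw [hvn2, norm_neg]; exact hv₁₂)
      (fun k => by
        have h := horth k
        rw [Real.sign_of_pos ha, Real.sign_of_neg hb] at h
        rw [hvn2]
        simpa using h)
      t ht0 ht1
    rw [hvn2, norm_neg] at this
    exact this
  · -- a > 0, b > 0
    exact aux_pos d M w₁ w₂ ha haR hb hbR hv₁ hv₁₂
      (fun k => by
        have h := horth k
        rw [Real.sign_of_pos ha, Real.sign_of_pos hb] at h
        simpa using h)
      t ht0 ht1
end
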